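/- Strengthening an edge predicate by conjunction yields a refinement set: given a GGQ Q with a positive edge e from positive node n to positive node m, and a formula φ, let Q' = Cl_Q^{\{n,m\}}; the four GGQs obtained by adding to Q' a new edge e' from n to m with predicate θ_e ∧ φ and with the four sign assignments (+,+), (+,-), (-,+), (-,-) for (n, m), form a refinement set of Q in G. -/
import Mathlib


/-! A formal model of Generalized Graph Queries (GGQ).

A GGQ over a data graph `G` with vertex type `V`, path type `P` (with endpoint maps
`psrc`, `pend`) and subgraph type `Sub` consists of: sets of query nodes and query
edges, source/target incidence maps, a sign map (`true` = `+`, `false` = `-`) on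
nodes and on edges, and the predicates `θ` on nodes (binary predicates on a data
vertex and a subgraph) and on edges (binary predicates on a data path and a
subgraph). -/
structure GGQ (NQ EQ V P Sub : Type*) where
  Vq : Set NQ
  Eq : Set EQ
  src : EQ → NQ
  tgt : EQ → NQ
  nsign : NQ → Bool
  esign : EQ → Bool
  ntheta : NQ → V → Sub → Prop
  etheta : EQ → P → Sub → Prop

variable {NQ EQ V P Sub : Type*}

/-- `signedP b p` is `p` if the sign `b` is positive and `¬ p` if it is negative. -/
def signedP (b : Bool) (p : Prop) : Prop := if b then p else ¬ p

/-- The `Q`-predicate `Q_{e^o}(v,S)`: there is a path starting at `v` satisfying the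
edge predicate `θ_e` and whose endpoints satisfy the node predicates of the endpoints
of `e`. -/
def QeO (psrc pend : P → V) (Q : GGQ NQ EQ V P Sub) (e : EQ) (v : V) (S : Sub) : Prop :=
  ∃ ρ : P, psrc ρ = v ∧ Q.etheta e ρ S ∧
    Q.ntheta (Q.src e) (psrc ρ) S ∧ Q.ntheta (Q.tgt e) (pend ρ) S

/-- The `Q`-predicate `Q_{e^i}(v,S)`: there is a path ending at `v` satisfying the
edge predicate `θ_e` and whose endpoints satisfy the node predicates of the endpoints
of `e`. -/
def QeI (psrc pend : P → V) (Q : GGQ NQ EQ V P Sub) (e : EQ) (v : V) (S : Sub) : Prop :=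
  ∃ ρ : P, pend ρ = v ∧ Q.etheta e ρ S ∧
    Q.ntheta (Q.src e) (psrc ρ) S ∧ Q.ntheta (Q.tgt e) (pend ρ) S

/-- The `Q`-predicate `Q_n(S)` of a query node `n`: there is a data vertex `v`
satisfying the signed edge conditions for all query edges incident to `n`. -/
def nodePred (psrc pend : P → V) (Q : GGQ NQ EQ V P Sub) (n : NQ) (S : Sub) : Prop :=
  ∃ v : V, ∀ e ∈ Q.Eq,
    (Q.src e = n → signedP (Q.esign e) (QeO psrc pend Q e v S)) ∧
    (Q.tgt e = n → signedP (Q.esign e) (QeI psrc pend Q e v S))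

/-- `S ⊨ Q`: the conjunction, over all query nodes `n`, of the signed `Q`-predicates
`Q_n^{α(n)}(S)`. -/
def SatQ (psrc pend : P → V) (Q : GGQ NQ EQ V P Sub) (S : Sub) : Prop :=
  ∀ n ∈ Q.Vq, signedP (Q.nsign n) (nodePred psrc pend Q n S)

/-- The clone `Cl_Q^W` of `Q` by duplication of `W`: for each `n ∈ W` a fresh copy
`Sum.inr n` with the same sign and predicate is added, together with all edges
obtained from edges incident to nodes of `W` by replacing, in all possible ways,
those endpoints by their copies (an edge `(e, b₁, b₂)` replaces the source of `e`
by its copy iff `b₁`, and the target iff `b₂`); new elements inherit all the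
properties of the originals. -/
def cloneQ (Q : GGQ NQ EQ V P Sub) (W : Set NQ) :
    GGQ (NQ ⊕ NQ) (EQ × Bool × Bool) V P Sub where
  Vq := Sum.inl '' Q.Vq ∪ Sum.inr '' W
  Eq := {x | x.1 ∈ Q.Eq ∧ (x.2.1 = true → Q.src x.1 ∈ W) ∧ (x.2.2 = true → Q.tgt x.1 ∈ W)}
  src := fun x => if x.2.1 then Sum.inr (Q.src x.1) else Sum.inl (Q.src x.1)
  tgt := fun x => if x.2.2 then Sum.inr (Q.tgt x.1) else Sum.inl (Q.tgt x.1)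
  nsign := Sum.elim Q.nsign Q.nsign
  esign := fun x => Q.esign x.1
  ntheta := Sum.elim Q.ntheta Q.ntheta
  etheta := fun x => Q.etheta x.1

/-- `Q + {n →^{θ_e ∧ φ} m}` with sign pattern `(s₁, s₂)`: clone `Q` duplicating
`{n, m}`, then add a new positive edge from the original `n` to the original `m`
whose predicate is the conjunction `θ_{e₀} ∧ φ` of the predicate of the existing
edge `e₀` with `φ`, and reassign to `n` and `m` the signs `s₁`, `s₂`. -/
def addEdgePred [DecidableEq NQ] (Q : GGQ NQ EQ V P Sub) (n m : NQ) (e₀ : EQ)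
    (φ : P → Sub → Prop) (s₁ s₂ : Bool) :
    GGQ (NQ ⊕ NQ) ((EQ × Bool × Bool) ⊕ Unit) V P Sub :=
  let C := cloneQ Q {n, m}
  { Vq := C.Vq
    Eq := Sum.inl '' C.Eq ∪ {Sum.inr ()}
    src := Sum.elim C.src (fun _ => Sum.inl n)
    tgt := Sum.elim C.tgt (fun _ => Sum.inl m)
    nsign := fun x => if x = Sum.inl n then s₁ else if x = Sum.inl m then s₂ else C.nsign x
    esign := Sum.elim C.esign (fun _ => true)
    ntheta := C.ntheta
    etheta := Sum.elim C.etheta (fun _ => fun ρ S => Q.etheta e₀ ρ S ∧ φ ρ S) }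


section Aux

variable [DecidableEq NQ] (psrc pend : P → V) (Q : GGQ NQ EQ V P Sub)
  (n m : NQ) (e₀ : EQ) (φ : P → Sub → Prop) (s₁ s₂ : Bool)

lemma signedP_iff {b : Bool} {p q : Prop} (h : p ↔ q) : signedP b p ↔ signedP b q := by
  cases b <;> simp [signedP, h]

lemma signedP_unique {a b : Bool} {p : Prop} (ha : signedP a p) (hb : signedP b p) : a = b := by
  cases a <;> cases b <;> simp_all [signedP]

/-- The `QeO` predicate of the new edge. -/
def auxNewO (v : V) (S : Sub) : Prop :=
  ∃ ρ : P, psrc ρ = v ∧ (Q.etheta e₀ ρ S ∧ φ ρ S) ∧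
    Q.ntheta n (psrc ρ) S ∧ Q.ntheta m (pend ρ) S

/-- The `QeI` predicate of the new edge. -/
def auxNewI (v : V) (S : Sub) : Prop :=
  ∃ ρ : P, pend ρ = v ∧ (Q.etheta e₀ ρ S ∧ φ ρ S) ∧
    Q.ntheta n (psrc ρ) S ∧ Q.ntheta m (pend ρ) S

/-- The strengthened node predicate of `n`. -/
def auxA (S : Sub) : Prop :=
  ∃ v : V, (∀ e ∈ Q.Eq, (Q.src e = n → signedP (Q.esign e) (QeO psrc pend Q e v S)) ∧
      (Q.tgt e = n → signedP (Q.esign e) (QeI psrc pend Q e v S))) ∧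
    auxNewO psrc pend Q n m e₀ φ v S

/-- The strengthened node predicate of `m`. -/
def auxB (S : Sub) : Prop :=
  ∃ v : V, (∀ e ∈ Q.Eq, (Q.src e = m → signedP (Q.esign e) (QeO psrc pend Q e v S)) ∧
      (Q.tgt e = m → signedP (Q.esign e) (QeI psrc pend Q e v S))) ∧
    auxNewI psrc pend Q n m e₀ φ v S

lemma QeO_addEdge_inl (x : EQ × Bool × Bool) (v : V) (S : Sub) :
    QeO psrc pend (addEdgePred Q n m e₀ φ s₁ s₂) (Sum.inl x) v S ↔
      QeO psrc pend Q x.1 v S := by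
  obtain ⟨e, b₁, b₂⟩ := x
  cases b₁ <;> cases b₂ <;> simp [QeO, addEdgePred, cloneQ]

lemma QeI_addEdge_inl (x : EQ × Bool × Bool) (v : V) (S : Sub) :
    QeI psrc pend (addEdgePred Q n m e₀ φ s₁ s₂) (Sum.inl x) v S ↔
      QeI psrc pend Q x.1 v S := by
  obtain ⟨e, b₁, b₂⟩ := x
  cases b₁ <;> cases b₂ <;> simp [QeI, addEdgePred, cloneQ]

lemma QeO_addEdge_inr (v : V) (S : Sub) :
    QeO psrc pend (addEdgePred Q n m e₀ φ s₁ s₂) (Sum.inr ()) v S ↔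
      auxNewO psrc pend Q n m e₀ φ v S := by
  simp [QeO, addEdgePred, cloneQ, auxNewO]

lemma QeI_addEdge_inr (v : V) (S : Sub) :
    QeI psrc pend (addEdgePred Q n m e₀ φ s₁ s₂) (Sum.inr ()) v S ↔
      auxNewI psrc pend Q n m e₀ φ v S := by
  simp [QeI, addEdgePred, cloneQ, auxNewI]

lemma mem_addEdge_inl (x : EQ × Bool × Bool) :
    Sum.inl x ∈ (addEdgePred Q n m e₀ φ s₁ s₂).Eq ↔
      (x.1 ∈ Q.Eq ∧ (x.2.1 = true → Q.src x.1 ∈ ({n, m} : Set NQ)) ∧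
        (x.2.2 = true → Q.tgt x.1 ∈ ({n, m} : Set NQ))) := by
  simp [addEdgePred, cloneQ]

lemma mem_addEdge_inr : Sum.inr () ∈ (addEdgePred Q n m e₀ φ s₁ s₂).Eq := by
  simp [addEdgePred]

/-- Characterization of the edge conditions at a node `Sum.inl k`. -/
lemma forall_edge_inl (k : NQ) (v : V) (S : Sub) :
    (∀ f ∈ (addEdgePred Q n m e₀ φ s₁ s₂).Eq,
        ((addEdgePred Q n m e₀ φ s₁ s₂).src f = Sum.inl k →
          signedP ((addEdgePred Q n m e₀ φ s₁ s₂).esign f)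
            (QeO psrc pend (addEdgePred Q n m e₀ φ s₁ s₂) f v S)) ∧
        ((addEdgePred Q n m e₀ φ s₁ s₂).tgt f = Sum.inl k →
          signedP ((addEdgePred Q n m e₀ φ s₁ s₂).esign f)
            (QeI psrc pend (addEdgePred Q n m e₀ φ s₁ s₂) f v S))) ↔
      ((∀ e ∈ Q.Eq, (Q.src e = k → signedP (Q.esign e) (QeO psrc pend Q e v S)) ∧
          (Q.tgt e = k → signedP (Q.esign e) (QeI psrc pend Q e v S))) ∧
        (n = k → auxNewO psrc pend Q n m e₀ φ v S) ∧
        (m = k → auxNewI psrc pend Q n m e₀ φ v S)) := by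
  constructor
  · intro h
    refine ⟨fun e he => ⟨fun hse => ?_, fun hte => ?_⟩, fun hnk => ?_, fun hmk => ?_⟩
    · have hmem : Sum.inl (e, false, false) ∈ (addEdgePred Q n m e₀ φ s₁ s₂).Eq := by
        rw [mem_addEdge_inl]; exact ⟨he, by simp, by simp⟩
      have := (h _ hmem).1 (by simp [addEdgePred, cloneQ, hse])
      rw [signedP_iff (QeO_addEdge_inl psrc pend Q n m e₀ φ s₁ s₂ _ v S)] at this
      simpa [addEdgePred, cloneQ] using this
    · have hmem : Sum.inl (e, false, false) ∈ (addEdgePred Q n m e₀ φ s₁ s₂).Eq := by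
        rw [mem_addEdge_inl]; exact ⟨he, by simp, by simp⟩
      have := (h _ hmem).2 (by simp [addEdgePred, cloneQ, hte])
      rw [signedP_iff (QeI_addEdge_inl psrc pend Q n m e₀ φ s₁ s₂ _ v S)] at this
      simpa [addEdgePred, cloneQ] using this
    · have := (h _ (mem_addEdge_inr Q n m e₀ φ s₁ s₂)).1 (by simp [addEdgePred, hnk])
      rw [signedP_iff (QeO_addEdge_inr psrc pend Q n m e₀ φ s₁ s₂ v S)] at this
      simpa [addEdgePred, signedP] using this
    · have := (h _ (mem_addEdge_inr Q n m e₀ φ s₁ s₂)).2 (by simp [addEdgePred, hmk])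
      rw [signedP_iff (QeI_addEdge_inr psrc pend Q n m e₀ φ s₁ s₂ v S)] at this
      simpa [addEdgePred, signedP] using this
  · rintro ⟨h, hN, hM⟩ (⟨e, b₁, b₂⟩ | u) hf
    · rw [mem_addEdge_inl] at hf
      constructor
      · intro hs
        rw [signedP_iff (QeO_addEdge_inl psrc pend Q n m e₀ φ s₁ s₂ _ v S)]
        cases b₁ with
        | true => simp [addEdgePred, cloneQ] at hs
        | false =>
          have hs' : Q.src e = k := by simpa [addEdgePred, cloneQ] using hs
          simpa [addEdgePred, cloneQ] using (h e hf.1).1 hs'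
      · intro ht
        rw [signedP_iff (QeI_addEdge_inl psrc pend Q n m e₀ φ s₁ s₂ _ v S)]
        cases b₂ with
        | true => simp [addEdgePred, cloneQ] at ht
        | false =>
          have ht' : Q.tgt e = k := by simpa [addEdgePred, cloneQ] using ht
          simpa [addEdgePred, cloneQ] using (h e hf.1).2 ht'
    · constructor
      · intro hs
        rw [signedP_iff (QeO_addEdge_inr psrc pend Q n m e₀ φ s₁ s₂ v S)]
        have hs' : n = k := by simpa [addEdgePred] using hs
        simpa [addEdgePred, signedP] using hN hs'
      · intro ht
        rw [signedP_iff (QeI_addEdge_inr psrc pend Q n m e₀ φ s₁ s₂ v S)]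
        have ht' : m = k := by simpa [addEdgePred] using ht
        simpa [addEdgePred, signedP] using hM ht' 

/-- Characterization of the edge conditions at a copy node `Sum.inr k`, `k ∈ {n,m}`. -/
lemma forall_edge_inr (k : NQ) (hk : k = n ∨ k = m) (v : V) (S : Sub) :
    (∀ f ∈ (addEdgePred Q n m e₀ φ s₁ s₂).Eq,
        ((addEdgePred Q n m e₀ φ s₁ s₂).src f = Sum.inr k →
          signedP ((addEdgePred Q n m e₀ φ s₁ s₂).esign f)
            (QeO psrc pend (addEdgePred Q n m e₀ φ s₁ s₂) f v S)) ∧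
        ((addEdgePred Q n m e₀ φ s₁ s₂).tgt f = Sum.inr k →
          signedP ((addEdgePred Q n m e₀ φ s₁ s₂).esign f)
            (QeI psrc pend (addEdgePred Q n m e₀ φ s₁ s₂) f v S))) ↔
      (∀ e ∈ Q.Eq, (Q.src e = k → signedP (Q.esign e) (QeO psrc pend Q e v S)) ∧
        (Q.tgt e = k → signedP (Q.esign e) (QeI psrc pend Q e v S))) := by
  have hk' : k ∈ ({n, m} : Set NQ) := by simpa using hk
  constructor
  · intro h
    refine fun e he => ⟨fun hse => ?_, fun hte => ?_⟩
    · have hmem : Sum.inl (e, true, false) ∈ (addEdgePred Q n m e₀ φ s₁ s₂).Eq := by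
        rw [mem_addEdge_inl]; exact ⟨he, fun _ => hse ▸ hk', by simp⟩
      have := (h _ hmem).1 (by simp [addEdgePred, cloneQ, hse])
      rw [signedP_iff (QeO_addEdge_inl psrc pend Q n m e₀ φ s₁ s₂ _ v S)] at this
      simpa [addEdgePred, cloneQ] using this
    · have hmem : Sum.inl (e, false, true) ∈ (addEdgePred Q n m e₀ φ s₁ s₂).Eq := by
        rw [mem_addEdge_inl]; exact ⟨he, by simp, fun _ => hte ▸ hk'⟩
      have := (h _ hmem).2 (by simp [addEdgePred, cloneQ, hte])
      rw [signedP_iff (QeI_addEdge_inl psrc pend Q n m e₀ φ s₁ s₂ _ v S)] at this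
      simpa [addEdgePred, cloneQ] using this
  · rintro h (⟨e, b₁, b₂⟩ | u) hf
    · rw [mem_addEdge_inl] at hf
      constructor
      · intro hs
        rw [signedP_iff (QeO_addEdge_inl psrc pend Q n m e₀ φ s₁ s₂ _ v S)]
        cases b₁ with
        | false => simp [addEdgePred, cloneQ] at hs
        | true =>
          have hs' : Q.src e = k := by simpa [addEdgePred, cloneQ] using hs
          simpa [addEdgePred, cloneQ] using (h e hf.1).1 hs'
      · intro ht
        rw [signedP_iff (QeI_addEdge_inl psrc pend Q n m e₀ φ s₁ s₂ _ v S)]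
        cases b₂ with
        | false => simp [addEdgePred, cloneQ] at ht
        | true =>
          have ht' : Q.tgt e = k := by simpa [addEdgePred, cloneQ] using ht
          simpa [addEdgePred, cloneQ] using (h e hf.1).2 ht'
    · exact ⟨fun hs => by simp [addEdgePred] at hs, fun ht => by simp [addEdgePred] at ht⟩

lemma nodePred_inl_ne (k : NQ) (hk1 : k ≠ n) (hk2 : k ≠ m) (S : Sub) :
    nodePred psrc pend (addEdgePred Q n m e₀ φ s₁ s₂) (Sum.inl k) S ↔
      nodePred psrc pend Q k S := by
  unfold nodePred
  refine exists_congr fun v => ?_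
  rw [forall_edge_inl]
  simp [Ne.symm hk1, Ne.symm hk2]

lemma nodePred_inr (k : NQ) (hk : k = n ∨ k = m) (S : Sub) :
    nodePred psrc pend (addEdgePred Q n m e₀ φ s₁ s₂) (Sum.inr k) S ↔
      nodePred psrc pend Q k S := by
  unfold nodePred
  exact exists_congr fun v => forall_edge_inr psrc pend Q n m e₀ φ s₁ s₂ k hk v S

lemma nodePred_inl_n (hnm : n ≠ m) (S : Sub) :
    nodePred psrc pend (addEdgePred Q n m e₀ φ s₁ s₂) (Sum.inl n) S ↔
      auxA psrc pend Q n m e₀ φ S := by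
  unfold nodePred auxA
  refine exists_congr fun v => ?_
  rw [forall_edge_inl]
  simp [Ne.symm hnm]

lemma nodePred_inl_m (hnm : n ≠ m) (S : Sub) :
    nodePred psrc pend (addEdgePred Q n m e₀ φ s₁ s₂) (Sum.inl m) S ↔
      auxB psrc pend Q n m e₀ φ S := by
  unfold nodePred auxB
  refine exists_congr fun v => ?_
  rw [forall_edge_inl]
  simp [hnm]

lemma SatQ_addEdge_iff (hn : n ∈ Q.Vq) (hm : m ∈ Q.Vq) (hnm : n ≠ m) (S : Sub) :
    SatQ psrc pend (addEdgePred Q n m e₀ φ s₁ s₂) S ↔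
      (SatQ psrc pend Q S ∧ signedP s₁ (auxA psrc pend Q n m e₀ φ S) ∧
        signedP s₂ (auxB psrc pend Q n m e₀ φ S)) := by
  constructor
  · intro h
    have hsignN : (addEdgePred Q n m e₀ φ s₁ s₂).nsign (Sum.inl n) = s₁ := by
      simp [addEdgePred]
    have hsignM : (addEdgePred Q n m e₀ φ s₁ s₂).nsign (Sum.inl m) = s₂ := by
      simp [addEdgePred, Ne.symm hnm]
    refine ⟨fun k hk => ?_, ?_, ?_⟩
    · by_cases hk1 : k = n
      · subst hk1
        have := h (Sum.inr k) (by simp [addEdgePred, cloneQ])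
        rw [signedP_iff (nodePred_inr psrc pend Q k m e₀ φ s₁ s₂ k (Or.inl rfl) S)] at this
        simpa [addEdgePred, cloneQ] using this
      · by_cases hk2 : k = m
        · subst hk2
          have := h (Sum.inr k) (by simp [addEdgePred, cloneQ])
          rw [signedP_iff (nodePred_inr psrc pend Q n k e₀ φ s₁ s₂ k (Or.inr rfl) S)] at this
          simpa [addEdgePred, cloneQ] using this
        · have := h (Sum.inl k) (by simp [addEdgePred, cloneQ]; exact hk)
          rw [signedP_iff (nodePred_inl_ne psrc pend Q n m e₀ φ s₁ s₂ k hk1 hk2 S)] at this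
          simpa [addEdgePred, cloneQ, hk1, hk2] using this
    · have := h (Sum.inl n) (by simp [addEdgePred, cloneQ]; exact hn)
      rw [signedP_iff (nodePred_inl_n psrc pend Q n m e₀ φ s₁ s₂ hnm S), hsignN] at this
      exact this
    · have := h (Sum.inl m) (by simp [addEdgePred, cloneQ]; exact hm)
      rw [signedP_iff (nodePred_inl_m psrc pend Q n m e₀ φ s₁ s₂ hnm S), hsignM] at this
      exact this
  · rintro ⟨hQ, hA, hB⟩ x hx
    simp only [addEdgePred, cloneQ, Set.mem_union, Set.mem_image] at hx
    rcases hx with ⟨k, hk, rfl⟩ | ⟨k, hk, rfl⟩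
    · by_cases hk1 : k = n
      · subst hk1
        rw [signedP_iff (nodePred_inl_n psrc pend Q k m e₀ φ s₁ s₂ hnm S)]
        simpa [addEdgePred] using hA
      · by_cases hk2 : k = m
        · subst hk2
          rw [signedP_iff (nodePred_inl_m psrc pend Q n k e₀ φ s₁ s₂ hnm S)]
          simpa [addEdgePred, Ne.symm hnm, hk1] using hB
        · rw [signedP_iff (nodePred_inl_ne psrc pend Q n m e₀ φ s₁ s₂ k hk1 hk2 S)]
          simpa [addEdgePred, cloneQ, hk1, hk2] using hQ k hk
    · have hk' : k = n ∨ k = m := by simpa using hk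
      rw [signedP_iff (nodePred_inr psrc pend Q n m e₀ φ s₁ s₂ k hk' S)]
      have : (addEdgePred Q n m e₀ φ s₁ s₂).nsign (Sum.inr k) = Q.nsign k := by
        simp [addEdgePred, cloneQ]
      rw [this]
      rcases hk' with rfl | rfl
      · exact hQ k hn
      · exact hQ k hm

end Aux

/-- Strengthening an edge predicate by conjunction yields a refinement set: given a
positive edge `e₀` from the positive node `n` to the positive node `m` and a formula
`φ`, the four sign-pattern queries obtained by adding a new edge from `n` to `m`
with predicate `θ_{e₀} ∧ φ` each refine `Q`, and every subgraph satisfying `Q`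
satisfies exactly one of them. -/
theorem addEdgePred_refinement_set [DecidableEq NQ] (psrc pend : P → V)
    (Q : GGQ NQ EQ V P Sub) (n m : NQ) (e₀ : EQ) (φ : P → Sub → Prop)
    (hn : n ∈ Q.Vq) (hm : m ∈ Q.Vq) (hnm : n ≠ m)
    (hpn : Q.nsign n = true) (hpm : Q.nsign m = true)
    (he₀ : e₀ ∈ Q.Eq) (hs₀ : Q.src e₀ = n) (ht₀ : Q.tgt e₀ = m)
    (hp₀ : Q.esign e₀ = true) :
    (∀ (s₁ s₂ : Bool) (S : Sub),
        SatQ psrc pend (addEdgePred Q n m e₀ φ s₁ s₂) S → SatQ psrc pend Q S) ∧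
    (∀ S : Sub, SatQ psrc pend Q S →
        ∃! p : Bool × Bool, SatQ psrc pend (addEdgePred Q n m e₀ φ p.1 p.2) S) := by
  constructor
  · intro s₁ s₂ S h
    exact ((SatQ_addEdge_iff psrc pend Q n m e₀ φ s₁ s₂ hn hm hnm S).1 h).1
  · intro S hS
    classical
    have hAd : ∀ (p : Prop) (_ : Decidable p), signedP (decide p) p := fun p _ => by
      by_cases hp : p <;> simp [signedP, hp]
    refine ⟨(decide (auxA psrc pend Q n m e₀ φ S), decide (auxB psrc pend Q n m e₀ φ S)),
      ?_, ?_⟩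
    · exact (SatQ_addEdge_iff psrc pend Q n m e₀ φ _ _ hn hm hnm S).2
        ⟨hS, hAd _ _, hAd _ _⟩
    · rintro ⟨a, b⟩ hp
      obtain ⟨-, ha, hb⟩ := (SatQ_addEdge_iff psrc pend Q n m e₀ φ a b hn hm hnm S).1 hp
      exact Prod.ext (signedP_unique ha (hAd _ _)) (signedP_unique hb (hAd _ _))
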